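/- Let s ∈ W be an involution (s² = e) such that s(ϖ_i) ≠ ϖ_i for every i ∈ {1,…,l}. Then the function f(λ) := ‖λ − s(λ)‖² is a homogeneous quadratic polynomial in the coordinates λ₁,…,λ_l of λ = Σ_{i=1}^l λ_i ϖ_i: there exist real constants c_{ij} (1 ≤ i, j ≤ l) with c_{ii} > 0 for every i and c_{ij} ≥ 0 for every i ≠ j, such that ‖λ − s(λ)‖² = Σ_{i,j} c_{ij} λ_i λ_j for all λ ∈ V. -/

import Mathlib

/-!
Take `c i j = ⟪u i, u j⟫` with `u i = ϖ_i - s ϖ_i`; the diagonal entries are positive since `s`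
moves every `ϖ_i`. As `s` is an isometric involution, `⟪u i, u j⟫ = 2 ⟪ϖ_i, ϖ_j - s ϖ_j⟫`, which is
nonnegative because `λ - w λ` is a nonnegative combination of simple roots whenever `λ` is
dominant and `w ∈ W`. That is proved by induction on the length of a word in simple reflections
for `w`: appending `s_i` either adds `⟨λ, α_i∨⟩ w α_i` with `w α_i` positive, or, by the exchange
property, shortens the word. Words in simple reflections exhaust `W` because
`s_α = s_i s_{s_i α} s_i`, where `s_i α` is a positive root lower than `α` (for `⟪ρ, ·⟫`)
whenever `⟪α, α_i⟫ > 0`.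
-/

open scoped RealInnerProductSpace

noncomputable section

/-- The pairing `⟨v, a∨⟩ = 2⟪v,a⟫/⟪a,a⟫` of `v` against the coroot of `a`. -/
def copair {V : Type*} [NormedAddCommGroup V] [InnerProductSpace ℝ V] (v a : V) : ℝ :=
  2 * ⟪v, a⟫ / ⟪a, a⟫

/-- The orthogonal reflection `s_a` in the hyperplane orthogonal to `a`,
as a linear isometry of `V`. -/
def sRefl {V : Type*} [NormedAddCommGroup V] [InnerProductSpace ℝ V] [FiniteDimensional ℝ V]
    (a : V) : V ≃ₗᵢ[ℝ] V :=
  Submodule.reflection (ℝ ∙ a)ᗮ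

/-- A finite crystallographic reduced root system `Φ` spanning a finite-dimensional real inner
product space `V`, together with a choice of positive roots `pos`, simple roots `sroot`,
and fundamental weights `fw`. -/
structure RootSystemCtx (V : Type*) [NormedAddCommGroup V] [InnerProductSpace ℝ V]
    [FiniteDimensional ℝ V] where
  l : ℕ
  Φ : Finset V
  pos : Finset V
  sroot : Fin l → V
  fw : Fin l → V
  nonzero : ∀ a ∈ Φ, a ≠ (0 : V)
  span_top : Submodule.span ℝ (Φ : Set V) = ⊤
  reduced : ∀ a ∈ Φ, ∀ t : ℝ, t • a ∈ Φ → t = 1 ∨ t = -1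
  refl_mem : ∀ a ∈ Φ, ∀ b ∈ Φ, sRefl a b ∈ Φ
  crystal : ∀ a ∈ Φ, ∀ b ∈ Φ, ∃ n : ℤ, copair b a = (n : ℝ)
  pos_subset : pos ⊆ Φ
  mem_pos_or : ∀ a ∈ Φ, (a ∈ pos ∧ -a ∉ pos) ∨ (a ∉ pos ∧ -a ∈ pos)
  sroot_mem : ∀ i, sroot i ∈ pos
  sroot_indep : LinearIndependent ℝ sroot
  pos_nat_comb : ∀ a ∈ pos, ∃ c : Fin l → ℕ, a = ∑ i, (c i : ℝ) • sroot i
  fw_pairing : ∀ i j, copair (fw i) (sroot j) = if i = j then 1 else 0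

namespace RootSystemCtx

variable {V : Type*} [NormedAddCommGroup V] [InnerProductSpace ℝ V] [FiniteDimensional ℝ V]
variable (R : RootSystemCtx V)

/-- The half sum of the positive roots, `ρ = Σ_i ϖ_i`. -/
def rho : V := ∑ i, R.fw i

/-- The Weyl group `W`, the subgroup of the isometry group of `V` generated by the
reflections in the roots. -/
def weylGroup : Subgroup (V ≃ₗᵢ[ℝ] V) :=
  Subgroup.closure {g | ∃ a ∈ R.Φ, g = sRefl a}

/-- `γ` is an expression of `w` as a product of simple reflections. -/
def IsExpression (w : V ≃ₗᵢ[ℝ] V) (γ : List (Fin R.l)) : Prop :=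
  w = (γ.map fun i => sRefl (R.sroot i)).prod

/-- `γ` is a reduced expression of `w`: an expression of minimal possible length. -/
def IsReducedExpression (w : V ≃ₗᵢ[ℝ] V) (γ : List (Fin R.l)) : Prop :=
  R.IsExpression w γ ∧ ∀ γ' : List (Fin R.l), R.IsExpression w γ' → γ.length ≤ γ'.length

/-- A weight is dominant if it pairs nonnegatively with every simple coroot. -/
def IsDominant (v : V) : Prop := ∀ i, 0 ≤ copair v (R.sroot i)

/-- `d` is the dominant representative `{v}` of the Weyl group orbit of `v`. -/
def IsDomRep (v d : V) : Prop := R.IsDominant d ∧ ∃ w ∈ R.weylGroup, w v = d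

end RootSystemCtx

section Reflections

variable {V : Type*} [NormedAddCommGroup V] [InnerProductSpace ℝ V] [FiniteDimensional ℝ V]

theorem sRefl_apply (a v : V) : sRefl a v = v - copair v a • a := by
  rw [sRefl, Submodule.reflection_orthogonal_apply, Submodule.reflection_singleton_apply,
    copair, real_inner_self_eq_norm_sq, real_inner_comm v a]
  simp only [RCLike.ofReal_real_eq_id, id_eq]
  module

theorem sRefl_mul_self (a : V) : sRefl a * sRefl a = 1 :=
  Submodule.reflection_mul_reflection _

theorem sRefl_inv (a : V) : (sRefl a)⁻¹ = sRefl a :=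
  inv_eq_of_mul_eq_one_right (sRefl_mul_self a)

theorem sRefl_neg (a : V) : sRefl (-a) = sRefl a := by
  ext v
  simp [sRefl_apply, copair, neg_div]

theorem sRefl_map (g : V ≃ₗᵢ[ℝ] V) (a : V) : sRefl (g a) = g * sRefl a * g⁻¹ := by
  ext v
  have hcopair : copair v (g a) = copair (g⁻¹ v) a := by
    rw [copair, copair, ← g.inner_map_map (g⁻¹ v), ← g.inner_map_map a a]
    simp [LinearIsometryEquiv.inv_def]
  simp [sRefl_apply, hcopair, LinearIsometryEquiv.inv_def]

end Reflections

theorem inner_sub_map_sub_map_of_mul_self_eq_one {E : Type*} [NormedAddCommGroup E]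
    [InnerProductSpace ℝ E] {s : E ≃ₗᵢ[ℝ] E} (hs : s * s = 1) (x y : E) :
    ⟪x - s x, y - s y⟫ = 2 * ⟪x, y - s y⟫ := by
  have hss : s (s y) = y := by simpa using congr($hs y)
  have hswap : ⟪s x, y⟫ = ⟪x, s y⟫ := by rw [← hss, s.inner_map_map, hss]
  simp only [inner_sub_left, inner_sub_right, s.inner_map_map, hswap]
  ring

theorem norm_sum_smul_sq {E ι : Type*} [NormedAddCommGroup E] [InnerProductSpace ℝ E]
    [Fintype ι] (a : ι → ℝ) (u : ι → E) :
    ‖∑ i, a i • u i‖ ^ 2 = ∑ i, ∑ j, ⟪u i, u j⟫ * a i * a j := by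
  rw [← real_inner_self_eq_norm_sq, sum_inner]
  refine Finset.sum_congr rfl fun i _ => ?_
  rw [inner_sum]
  refine Finset.sum_congr rfl fun j _ => ?_
  rw [real_inner_smul_left, real_inner_smul_right]
  ring

namespace RootSystemCtx

variable {V : Type*} [NormedAddCommGroup V] [InnerProductSpace ℝ V] [FiniteDimensional ℝ V]
variable (R : RootSystemCtx V)

theorem sroot_mem_Φ (i : Fin R.l) : R.sroot i ∈ R.Φ := R.pos_subset (R.sroot_mem i)

theorem inner_sroot_self_pos (i : Fin R.l) : 0 < ⟪R.sroot i, R.sroot i⟫ :=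
  real_inner_self_pos.mpr (R.nonzero _ (R.sroot_mem_Φ i))

theorem neg_mem_pos_of_notMem_pos {a : V} (ha : a ∈ R.Φ) (h : a ∉ R.pos) : -a ∈ R.pos := by
  rcases R.mem_pos_or a ha with ⟨hp, -⟩ | ⟨-, hp⟩
  · exact absurd hp h
  · exact hp

theorem inner_fw_sroot (i j : Fin R.l) :
    ⟪R.fw i, R.sroot j⟫ = if i = j then ⟪R.sroot j, R.sroot j⟫ / 2 else 0 := by
  have h := R.fw_pairing i j
  have hne := (R.inner_sroot_self_pos j).ne'
  rw [copair] at h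
  split_ifs at h ⊢ <;> field_simp at h <;> linarith

theorem inner_fw_sum_smul_sroot (c : Fin R.l → ℝ) (j : Fin R.l) :
    ⟪R.fw j, ∑ i, c i • R.sroot i⟫ = c j * (⟪R.sroot j, R.sroot j⟫ / 2) := by
  simp [inner_sum, real_inner_smul_right, inner_fw_sroot]

theorem inner_rho_sroot (i : Fin R.l) : ⟪R.rho, R.sroot i⟫ = ⟪R.sroot i, R.sroot i⟫ / 2 := by
  simp [rho, sum_inner, inner_fw_sroot]

theorem inner_fw_nonneg_of_mem_pos (j : Fin R.l) {a : V} (ha : a ∈ R.pos) :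
    0 ≤ ⟪R.fw j, a⟫ := by
  obtain ⟨c, rfl⟩ := R.pos_nat_comb a ha
  rw [inner_fw_sum_smul_sroot]
  exact mul_nonneg (Nat.cast_nonneg _) (by linarith [R.inner_sroot_self_pos j])

theorem isDominant_fw (j : Fin R.l) : R.IsDominant (R.fw j) := by
  intro i
  rw [R.fw_pairing j i]
  split_ifs <;> norm_num

theorem sRefl_sroot_mem_pos {a : V} (ha : a ∈ R.pos) (i : Fin R.l) (hne : a ≠ R.sroot i) :
    sRefl (R.sroot i) a ∈ R.pos := by
  by_contra hnot
  have hneg := R.neg_mem_pos_of_notMem_pos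
    (R.refl_mem _ (R.sroot_mem_Φ i) _ (R.pos_subset ha)) hnot
  obtain ⟨c, hc⟩ := R.pos_nat_comb a ha
  -- off `α_i`, the coordinates of `a` and of `s_i a` agree, so they vanish
  have hck : ∀ k, k ≠ i → (c k : ℝ) = 0 := by
    intro k hk
    have h1 := R.inner_fw_nonneg_of_mem_pos k hneg
    rw [inner_neg_right, sRefl_apply, inner_sub_right, real_inner_smul_right,
      inner_fw_sroot, if_neg hk, mul_zero, sub_zero, hc, inner_fw_sum_smul_sroot] at h1
    have := R.inner_sroot_self_pos k
    have : (0 : ℝ) ≤ c k := Nat.cast_nonneg _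
    nlinarith
  have hai : a = (c i : ℝ) • R.sroot i := by
    rw [hc, Finset.sum_eq_single i (fun k _ hk => by rw [hck k hk, zero_smul]) (by simp)]
  rcases R.reduced _ (R.sroot_mem_Φ i) _ (hai ▸ R.pos_subset ha) with h1 | h1
  · exact hne (by rw [hai, h1, one_smul])
  · linarith [(Nat.cast_nonneg (c i) : (0 : ℝ) ≤ c i)]

def wordProd (ω : List (Fin R.l)) : V ≃ₗᵢ[ℝ] V := (ω.map fun i => sRefl (R.sroot i)).prod

@[simp]
theorem wordProd_nil : R.wordProd [] = 1 := rfl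

@[simp]
theorem wordProd_cons (i : Fin R.l) (ω : List (Fin R.l)) :
    R.wordProd (i :: ω) = sRefl (R.sroot i) * R.wordProd ω := by
  simp [wordProd]

@[simp]
theorem wordProd_singleton (i : Fin R.l) : R.wordProd [i] = sRefl (R.sroot i) := by
  simp [wordProd]

@[simp]
theorem wordProd_append (ω ω' : List (Fin R.l)) :
    R.wordProd (ω ++ ω') = R.wordProd ω * R.wordProd ω' := by
  simp [wordProd]

theorem exists_wordProd_eq_mul_sRefl_of_notMem_pos (ω : List (Fin R.l)) (j : Fin R.l)
    (h : R.wordProd ω (R.sroot j) ∉ R.pos) :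
    ∃ ω' : List (Fin R.l), ω'.length + 1 = ω.length ∧
      R.wordProd ω * sRefl (R.sroot j) = R.wordProd ω' := by
  induction ω with
  | nil => exact absurd (R.sroot_mem j) (by simpa using h)
  | cons i ω ih =>
    by_cases hpos : R.wordProd ω (R.sroot j) ∈ R.pos
    · -- the sign flips at `s_i`, so `wordProd ω` carries `α_j` to `α_i` and `s_i` can be dropped
      have hβ : R.wordProd ω (R.sroot j) = R.sroot i := by
        by_contra hne
        exact h (by simpa using R.sRefl_sroot_mem_pos hpos i hne)
      refine ⟨ω, rfl, ?_⟩
      rw [wordProd_cons, ← hβ, sRefl_map, mul_assoc, mul_assoc, mul_assoc, inv_mul_cancel_left,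
        sRefl_mul_self, mul_one]
    · obtain ⟨ω', hlen, hω'⟩ := ih hpos
      exact ⟨i :: ω', by simp [hlen], by rw [wordProd_cons, wordProd_cons, mul_assoc, hω']⟩

theorem exists_wordProd_eq_sRefl_of_mem_pos {a : V} (ha : a ∈ R.pos) :
    ∃ ω, sRefl a = R.wordProd ω := by
  have hwf : (R.pos : Set V).WellFoundedOn fun b c => ⟪R.rho, b⟫ < ⟪R.rho, c⟫ :=
    Set.wellFoundedOn_image.mp (R.pos.finite_toSet.image _).wellFoundedOn
  refine hwf.induction (P := fun a => ∃ ω, sRefl a = R.wordProd ω) ha fun a ha ih => ?_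
  obtain ⟨c, hc⟩ := R.pos_nat_comb a ha
  obtain ⟨i, hi⟩ : ∃ i, 0 < ⟪a, R.sroot i⟫ := by
    by_contra! hno
    have : ⟪a, a⟫ ≤ 0 := by
      nth_rewrite 2 [hc]
      rw [inner_sum]
      exact Finset.sum_nonpos fun k _ => by
        rw [real_inner_smul_right]
        exact mul_nonpos_of_nonneg_of_nonpos (Nat.cast_nonneg _) (hno k)
    exact this.not_gt (real_inner_self_pos.mpr (R.nonzero a (R.pos_subset ha)))
  by_cases hsimple : a = R.sroot i
  · exact ⟨[i], by simp [hsimple]⟩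
  have hlower : ⟪R.rho, sRefl (R.sroot i) a⟫ < ⟪R.rho, a⟫ := by
    have hαα := R.inner_sroot_self_pos i
    have hcopair : 0 < copair a (R.sroot i) := by
      rw [copair]
      positivity
    rw [sRefl_apply, inner_sub_right, real_inner_smul_right, inner_rho_sroot]
    nlinarith
  obtain ⟨ω, hω⟩ := ih _ (R.sRefl_sroot_mem_pos ha i hsimple) hlower
  refine ⟨i :: (ω ++ [i]), ?_⟩
  have hconj := sRefl_map (sRefl (R.sroot i)) a
  rw [hω, sRefl_inv] at hconj
  rw [wordProd_cons, wordProd_append, wordProd_singleton, hconj]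
  simp only [mul_assoc, sRefl_mul_self, mul_one]
  rw [← mul_assoc, sRefl_mul_self, one_mul]

theorem exists_wordProd_eq_sRefl {a : V} (ha : a ∈ R.Φ) : ∃ ω, sRefl a = R.wordProd ω := by
  rcases R.mem_pos_or a ha with ⟨hp, -⟩ | ⟨-, hp⟩
  · exact R.exists_wordProd_eq_sRefl_of_mem_pos hp
  · simpa [sRefl_neg] using R.exists_wordProd_eq_sRefl_of_mem_pos hp

theorem exists_wordProd_eq_of_mem_weylGroup {w : V ≃ₗᵢ[ℝ] V} (hw : w ∈ R.weylGroup) :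
    ∃ ω, w = R.wordProd ω := by
  induction hw using Subgroup.closure_induction'' with
  | mem _ hx =>
    obtain ⟨a, ha, rfl⟩ := hx
    exact R.exists_wordProd_eq_sRefl ha
  | inv_mem _ hx =>
    obtain ⟨a, ha, rfl⟩ := hx
    simpa [sRefl_inv] using R.exists_wordProd_eq_sRefl ha
  | one => exact ⟨[], rfl⟩
  | mul _ _ _ _ hx hy =>
    obtain ⟨ω, rfl⟩ := hx
    obtain ⟨ω', rfl⟩ := hy
    exact ⟨ω ++ ω', (R.wordProd_append ω ω').symm⟩

theorem inner_fw_sub_wordProd_apply_nonneg (ω : List (Fin R.l)) {v : V} (hv : R.IsDominant v)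
    (j : Fin R.l) : 0 ≤ ⟪R.fw j, v - R.wordProd ω v⟫ := by
  rcases ω.eq_nil_or_concat' with rfl | ⟨ω, i, rfl⟩
  · simp
  by_cases hpos : R.wordProd ω (R.sroot i) ∈ R.pos
  · have hsplit : v - R.wordProd (ω ++ [i]) v =
        (v - R.wordProd ω v) + copair v (R.sroot i) • R.wordProd ω (R.sroot i) := by
      simp only [wordProd_append, wordProd_singleton, LinearIsometryEquiv.coe_mul,
        Function.comp_apply, sRefl_apply, map_sub, map_smul]
      abel
    rw [hsplit, inner_add_right, real_inner_smul_right]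
    exact add_nonneg (inner_fw_sub_wordProd_apply_nonneg ω hv j)
      (mul_nonneg (hv i) (R.inner_fw_nonneg_of_mem_pos j hpos))
  · obtain ⟨ω', hlen, hω'⟩ := R.exists_wordProd_eq_mul_sRefl_of_notMem_pos ω i hpos
    rw [wordProd_append, wordProd_singleton, hω']
    exact inner_fw_sub_wordProd_apply_nonneg ω' hv j
termination_by ω.length
decreasing_by all_goals (subst_vars; simp only [List.length_append, List.length_singleton]; omega)

theorem inner_fw_sub_apply_nonneg {w : V ≃ₗᵢ[ℝ] V} (hw : w ∈ R.weylGroup) {v : V}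
    (hv : R.IsDominant v) (j : Fin R.l) : 0 ≤ ⟪R.fw j, v - w v⟫ := by
  obtain ⟨ω, rfl⟩ := R.exists_wordProd_eq_of_mem_weylGroup hw
  exact R.inner_fw_sub_wordProd_apply_nonneg ω hv j

end RootSystemCtx

/-- For an involution `s ∈ W` fixing no fundamental weight, the function
`f(λ) = ‖λ − s(λ)‖²` is a homogeneous quadratic polynomial in the coordinates of
`λ = Σ λ_i ϖ_i` whose diagonal coefficients are positive and whose off-diagonal
coefficients are nonnegative. -/
theorem statement3 {V : Type*} [NormedAddCommGroup V] [InnerProductSpace ℝ V]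
    [FiniteDimensional ℝ V] (R : RootSystemCtx V)
    (s : V ≃ₗᵢ[ℝ] V) (hs : s ∈ R.weylGroup) (hinv : s * s = 1)
    (hfix : ∀ i, s (R.fw i) ≠ R.fw i) :
    ∃ c : Fin R.l → Fin R.l → ℝ,
      (∀ i, 0 < c i i) ∧ (∀ i j, i ≠ j → 0 ≤ c i j) ∧
      ∀ coeff : Fin R.l → ℝ,
        ‖(∑ i, coeff i • R.fw i) - s (∑ i, coeff i • R.fw i)‖ ^ 2 =
          ∑ i, ∑ j, c i j * coeff i * coeff j := by
  set u : Fin R.l → V := fun i => R.fw i - s (R.fw i)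
  refine ⟨fun i j => ⟪u i, u j⟫, fun i => ?_, fun i j _ => ?_, fun coeff => ?_⟩
  · exact real_inner_self_pos.mpr (sub_ne_zero.mpr (hfix i).symm)
  · change 0 ≤ ⟪u i, u j⟫
    rw [inner_sub_map_sub_map_of_mul_self_eq_one hinv]
    exact mul_nonneg zero_le_two (R.inner_fw_sub_apply_nonneg hs (R.isDominant_fw j) i)
  · have hlin : (∑ i, coeff i • R.fw i) - s (∑ i, coeff i • R.fw i) = ∑ i, coeff i • u i := by
      simp [u, map_sum, smul_sub, Finset.sum_sub_distrib]
    rw [hlin, norm_sum_smul_sq]
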